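/- For the Sorgenfrey line ℝ_ℓ, the poset Q(ℝ_ℓ) of compact saturated subsets ordered by reverse inclusion has one-step closure but is not a continuous poset. -/

import Mathlib

open Set

section OrderDefs

variable {L : Type*} [Preorder L]

/-- Downward closure `↓A`. -/
def dw (A : Set L) : Set L := {x | ∃ a ∈ A, x ≤ a}

/-- Upward closure `↑A`. -/
def up (A : Set L) : Set L := {x | ∃ a ∈ A, a ≤ x}

/-- Scott closure of a set. -/
def scottCl (A : Set L) : Set L := @closure L (Topology.scott L Set.univ) A

/-- `A' = {x : ∃ directed D ⊆ ↓A with x = sup D}`. -/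
def oneStep (A : Set L) : Set L :=
  {x | ∃ D : Set L, D ⊆ dw A ∧ D.Nonempty ∧ DirectedOn (· ≤ ·) D ∧ IsLUB D x}

/-- `A'' = {x : ∃ directed D ⊆ ↓A with x ≤ sup D}`. -/
def weakOneStep (A : Set L) : Set L :=
  {x | ∃ D : Set L, D ⊆ dw A ∧ D.Nonempty ∧ DirectedOn (· ≤ ·) D ∧ ∃ y, IsLUB D y ∧ x ≤ y}

/-- A poset has one-step closure if `cl(A) = A'` for all `A`. -/
def HasOneStepClosure (L : Type*) [Preorder L] : Prop :=
  ∀ A : Set L, scottCl A = oneStep A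

/-- A poset has weak one-step closure if `cl(A) = A''` for all `A`. -/
def HasWeakOneStepClosure (L : Type*) [Preorder L] : Prop :=
  ∀ A : Set L, scottCl A = weakOneStep A

/-- Meet continuity: `x ≤ sup D` implies `x ∈ cl(↓D ∩ ↓x)`. -/
def MeetContinuous (L : Type*) [Preorder L] : Prop :=
  ∀ x : L, ∀ D : Set L, D.Nonempty → DirectedOn (· ≤ ·) D → ∀ s, IsLUB D s → x ≤ s →
    x ∈ scottCl (dw D ∩ dw ({x} : Set L))

/-- The way-below relation `x ≪ y`. -/
def wayBelow (x y : L) : Prop :=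
  ∀ D : Set L, D.Nonempty → DirectedOn (· ≤ ·) D → ∀ s, IsLUB D s → y ≤ s →
    (D ∩ up ({x} : Set L)).Nonempty

/-- The weakly way-below relation `x ≪_w y`. -/
def weaklyWayBelow (x y : L) : Prop :=
  ∀ D : Set L, D.Nonempty → DirectedOn (· ≤ ·) D → IsLUB D y →
    (D ∩ up ({x} : Set L)).Nonempty

/-- A continuous poset: each `⇓x` is directed with supremum `x`. -/
def ContinuousPoset (L : Type*) [Preorder L] : Prop :=
  ∀ x : L, {y | wayBelow y x}.Nonempty ∧ DirectedOn (· ≤ ·) {y | wayBelow y x} ∧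
    IsLUB {y | wayBelow y x} x

/-- An exact poset: each `⇓_w x` is directed with supremum `x`. -/
def ExactPoset (L : Type*) [Preorder L] : Prop :=
  ∀ x : L, {y | weaklyWayBelow y x}.Nonempty ∧ DirectedOn (· ≤ ·) {y | weaklyWayBelow y x} ∧
    IsLUB {y | weaklyWayBelow y x} x

/-- `F ≪ x` for a set `F`: every directed `D` with `sup D ≥ x` meets `↑F`. -/
def finWayBelow (F : Set L) (x : L) : Prop :=
  ∀ D : Set L, D.Nonempty → DirectedOn (· ≤ ·) D → ∀ s, IsLUB D s → x ≤ s →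
    (D ∩ up F).Nonempty

/-- A quasicontinuous poset: each `fin(x)` is a directed family (Smyth preorder)
with `↑x = ⋂_{F ∈ fin(x)} ↑F`. -/
def QuasicontinuousPoset (L : Type*) [Preorder L] : Prop :=
  ∀ x : L, {F : Set L | F.Finite ∧ finWayBelow F x}.Nonempty ∧
    DirectedOn (fun F G => up G ⊆ up F) {F : Set L | F.Finite ∧ finWayBelow F x} ∧
    up ({x} : Set L) = ⋂ F ∈ {F : Set L | F.Finite ∧ finWayBelow F x}, up F

/-- A dcpo: every (nonempty) directed subset has a least upper bound. -/
def IsDcpo (L : Type*) [Preorder L] : Prop :=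
  ∀ D : Set L, D.Nonempty → DirectedOn (· ≤ ·) D → ∃ x, IsLUB D x

end OrderDefs

section TopoDefs

variable {X : Type*} [TopologicalSpace X]

/-- A set is saturated if it is the intersection of all open sets containing it. -/
def IsSaturatedSet (A : Set X) : Prop := A = ⋂₀ {U : Set X | IsOpen U ∧ A ⊆ U}

/-- A space is well-filtered if for every filtered family `𝒞` of compact saturated sets
and every open `U` with `⋂𝒞 ⊆ U` there is `K ∈ 𝒞` with `K ⊆ U`. -/
def WellFiltered (X : Type*) [TopologicalSpace X] : Prop :=
  ∀ 𝒞 : Set (Set X), 𝒞.Nonempty → (∀ K ∈ 𝒞, IsCompact K ∧ IsSaturatedSet K) →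
    DirectedOn (fun A B => B ⊆ A) 𝒞 →
    ∀ U : Set X, IsOpen U → ⋂₀ 𝒞 ⊆ U → ∃ K ∈ 𝒞, K ⊆ U

end TopoDefs

/-- The Sorgenfrey line: `ℝ` with the topology generated by half-open intervals `[a, b)`. -/
def Rl : Type := ℝ

noncomputable instance : LinearOrder Rl := inferInstanceAs (LinearOrder ℝ)

instance : TopologicalSpace Rl :=
  TopologicalSpace.generateFrom {s : Set Rl | ∃ a b : Rl, a < b ∧ s = Set.Ico a b}

/-- `Q(X)`: the compact saturated subsets of `X`, ordered by reverse inclusion. -/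
def QX (X : Type*) [TopologicalSpace X] : Type _ :=
  {K : Set X // IsCompact K ∧ IsSaturatedSet K}

instance {X : Type*} [TopologicalSpace X] : PartialOrder (QX X) where
  le K K' := K'.1 ⊆ K.1
  le_refl K := subset_rfl
  le_trans _ _ _ h1 h2 := Set.Subset.trans h2 h1
  le_antisymm a b h1 h2 := Subtype.ext (Set.Subset.antisymm h2 h1)

/-!
Directed suprema in `Q(X)` are intersections, and for Hausdorff `X` the poset `Q(X)` is
well-filtered, so the Scott closure of `A ⊆ Q(X)` lies in the closure of `A` for the upper
Vietoris topology. On `ℝₗ` a compact `K` has uniform right neighbourhoods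
`⋃ x ∈ K, [x, x + ε)` inside each of its open neighbourhoods; hence if compact sets `aₙ` lie in
the `1/(n+1)`-neighbourhoods of `K`, the sets `K ∪ ⋃ n ≥ j, aₙ` are compact and decrease to `K`.
Taking `aₙ ∈ A` exhibits every point of the Vietoris closure of `A` as a directed supremum of
elements below `A`. Taking `aₙ = {pₙ}` with `pₙ ∈ (x, x + 1/(n+1))` outside a given compact `y`,
which exists because no compact subset of `ℝₗ` contains an open interval, shows that no `y` is
way below a nonempty `K`.
-/

open Filter Topology

section ScottClosure

variable {L : Type*} [Preorder L]

lemma isClosed_scott_iff {S : Set L} :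
    IsClosed[Topology.scott L univ] S ↔ IsLowerSet S ∧ DirSupClosed S :=
  letI := Topology.scott L univ
  haveI : Topology.IsScott L univ := ⟨rfl⟩
  Topology.IsScott.isClosed_iff_isLowerSet_and_dirSupClosed

lemma scottCl_subset {A S : Set L} (hAS : A ⊆ S) (hS : IsLowerSet S) (hS' : DirSupClosed S) :
    scottCl A ⊆ S :=
  @closure_minimal L (Topology.scott L univ) A S hAS (isClosed_scott_iff.2 ⟨hS, hS'⟩)

lemma oneStep_subset_scottCl (A : Set L) : oneStep A ⊆ scottCl A := by
  obtain ⟨hlower, hdirSup⟩ := isClosed_scott_iff.1 (@isClosed_closure L (Topology.scott L univ) A)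
  rintro x ⟨D, hDA, hDne, hD, hx⟩
  refine hdirSup (fun e he => ?_) hDne hD hx
  obtain ⟨b, hbA, heb⟩ := hDA he
  exact hlower heb (@subset_closure L (Topology.scott L univ) A _ hbA)

end ScottClosure

section TailUnion

variable {X : Type*} [TopologicalSpace X] {K : Set X} {a : ℕ → Set X}

lemma isCompact_union_iUnion_ge (hK : IsCompact K) (ha : ∀ n, IsCompact (a n))
    (hconv : ∀ U, IsOpen U → K ⊆ U → ∀ᶠ n in atTop, a n ⊆ U) (j : ℕ) :
    IsCompact (K ∪ ⋃ n ≥ j, a n) := by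
  intro l _ hlS
  by_cases hKl : ∃ x ∈ K, ClusterPt x l
  · obtain ⟨x, hx, hxl⟩ := hKl
    exact ⟨x, Or.inl hx, hxl⟩
  push Not at hKl
  have hdisj : Disjoint (𝓝ˢ K) l :=
    hK.disjoint_nhdsSet_left.2 fun x hx => disjoint_iff.2 (not_neBot.1 (hKl x hx))
  obtain ⟨U, ⟨hUo, hKU⟩, V, hVl, hUV⟩ := ((hasBasis_nhdsSet K).disjoint_iff l.basis_sets).1 hdisj
  obtain ⟨N, hN⟩ := (hconv U hUo hKU).exists_forall_of_atTop
  have hfin : ⋃ n ∈ Finset.Ico j N, a n ∈ l := by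
    filter_upwards [le_principal_iff.1 hlS, hVl] with x hxS hxV
    have hxU : x ∉ U := fun hxU => hUV.ne_of_mem hxU hxV rfl
    obtain hxK | hx := hxS
    · exact absurd (hKU hxK) hxU
    obtain ⟨n, hn, hxn⟩ := mem_iUnion₂.1 hx
    exact mem_iUnion₂.2 ⟨n, Finset.mem_Ico.2 ⟨hn, not_le.1 fun hNn => hxU (hN n hNn hxn)⟩, hxn⟩
  obtain ⟨x, hx, hxl⟩ :=
    (Finset.Ico j N).isCompact_biUnion (fun n _ => ha n) (le_principal_iff.2 hfin)
  obtain ⟨n, hn, hxn⟩ := mem_iUnion₂.1 hx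
  exact ⟨x, Or.inr (mem_iUnion₂.2 ⟨n, (Finset.mem_Ico.1 hn).1, hxn⟩), hxl⟩

lemma iInter_union_iUnion_ge [T1Space X]
    (hconv : ∀ U, IsOpen U → K ⊆ U → ∀ᶠ n in atTop, a n ⊆ U) :
    ⋂ j, (K ∪ ⋃ n ≥ j, a n) = K := by
  refine (subset_iInter fun j => subset_union_left).antisymm' fun x hx => ?_
  by_contra hxK
  obtain ⟨N, hN⟩ := (hconv {x}ᶜ isOpen_compl_singleton
    (subset_compl_singleton_iff.2 hxK)).exists_forall_of_atTop
  obtain hxK' | hx' := mem_iInter.1 hx N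
  · exact hxK hxK'
  obtain ⟨n, hn, hxn⟩ := mem_iUnion₂.1 hx'
  exact hN n hn hxn rfl

end TailUnion

section QXLemmas

variable {X : Type*} [TopologicalSpace X]

lemma isSaturatedSet_of_t1Space [T1Space X] (A : Set X) : IsSaturatedSet A := by
  refine (subset_sInter fun U hU => hU.2).antisymm fun x hx => ?_
  by_contra hxA
  exact hx {x}ᶜ ⟨isOpen_compl_singleton, subset_compl_singleton_iff.2 hxA⟩ rfl

namespace QX

def ofCompact [T1Space X] {K : Set X} (hK : IsCompact K) : QX X :=
  ⟨K, hK, isSaturatedSet_of_t1Space K⟩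

lemma le_def {K L : QX X} : K ≤ L ↔ L.1 ⊆ K.1 := Iff.rfl

lemma isLUB_of_val_eq_biInter {D : Set (QX X)} {K : QX X} (h : K.1 = ⋂ d ∈ D, d.1) :
    IsLUB D K :=
  ⟨fun _ hd => le_def.2 <| h ▸ biInter_subset_of_mem hd,
    fun _ hL => le_def.2 <| h ▸ subset_iInter₂ fun _ hd => le_def.1 (hL hd)⟩

lemma val_eq_biInter_of_isLUB [T2Space X] {D : Set (QX X)} (hD : D.Nonempty) {K : QX X}
    (hK : IsLUB D K) : K.1 = ⋂ d ∈ D, d.1 := by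
  obtain ⟨d₀, hd₀⟩ := hD
  have hcompact : IsCompact (⋂ d ∈ D, d.1) :=
    d₀.2.1.of_isClosed_subset (isClosed_biInter fun d _ => d.2.1.isClosed)
      (biInter_subset_of_mem hd₀)
  refine Subset.antisymm (subset_iInter₂ fun d hd => le_def.1 (hK.1 hd)) ?_
  exact le_def.1 <| hK.2
    (show ofCompact hcompact ∈ upperBounds D from fun _ hd => biInter_subset_of_mem hd)

/-- `Q(X)` is well-filtered. -/
lemma exists_val_subset_of_isLUB [T2Space X] {D : Set (QX X)} (hD : D.Nonempty)
    (hdir : DirectedOn (· ≤ ·) D) {K : QX X} (hK : IsLUB D K) {U : Set X} (hU : IsOpen U)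
    (hKU : K.1 ⊆ U) : ∃ d ∈ D, d.1 ⊆ U := by
  have := hD.to_subtype
  obtain ⟨⟨d, hd⟩, hdU⟩ := exists_subset_nhds_of_isCompact (V := fun d : D => d.1.1)
    hdir.directed_val (fun d => d.1.2.1) fun x hx => hU.mem_nhds <| hKU <| by
      rw [val_eq_biInter_of_isLUB hD hK]
      exact mem_iInter₂.2 fun d hd => mem_iInter.1 hx ⟨d, hd⟩
  exact ⟨d, hd, hdU⟩

lemma exists_directed_isLUB_of_tendsto [T1Space X] (K : QX X) {a : ℕ → Set X}
    (ha : ∀ n, IsCompact (a n)) (hconv : ∀ U, IsOpen U → K.1 ⊆ U → ∀ᶠ n in atTop, a n ⊆ U) :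
    ∃ d : ℕ → QX X, (∀ n, a n ⊆ (d n).1) ∧ DirectedOn (· ≤ ·) (range d) ∧ IsLUB (range d) K := by
  let d j := ofCompact (isCompact_union_iUnion_ge K.2.1 ha hconv j)
  have hmono : Monotone d := fun _ _ hjk =>
    union_subset_union_right _ (biUnion_mono (fun _ => hjk.trans) fun _ _ => le_rfl)
  refine ⟨d, fun n => subset_union_right.trans' (subset_biUnion_of_mem (le_refl n)),
    directedOn_range.2 hmono.directed_le, isLUB_of_val_eq_biInter ?_⟩
  rw [biInter_range]
  exact (iInter_union_iUnion_ge hconv).symm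

/-- The closure of `A` in the upper Vietoris topology, whose basic open sets are
`{K | K ⊆ U}` for `U` open. -/
def vietorisClosure (A : Set (QX X)) : Set (QX X) :=
  {K | ∀ U, IsOpen U → K.1 ⊆ U → ∃ a ∈ A, a.1 ⊆ U}

lemma scottCl_subset_vietorisClosure [T2Space X] (A : Set (QX X)) :
    scottCl A ⊆ vietorisClosure A := by
  refine scottCl_subset (fun a ha U _ haU => ⟨a, ha, haU⟩)
    (fun K L hLK hK U hU hLU => hK U hU ((le_def.1 hLK).trans hLU)) ?_
  intro D hDA hD hdir K hK U hU hKU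
  obtain ⟨d, hd, hdU⟩ := exists_val_subset_of_isLUB hD hdir hK hU hKU
  exact hDA hd U hU hdU

end QX

end QXLemmas

namespace Rl

def toReal : Rl ≃o ℝ := OrderIso.refl ℝ

lemma isTopologicalBasis_Ico :
    TopologicalSpace.IsTopologicalBasis {s : Set Rl | ∃ a b : Rl, a < b ∧ s = Ico a b} where
  exists_subset_inter := by
    rintro _ ⟨a, b, -, rfl⟩ _ ⟨c, d, -, rfl⟩ x ⟨⟨hax, hxb⟩, hcx, hxd⟩
    exact ⟨Ico x (min b d), ⟨x, min b d, lt_min hxb hxd, rfl⟩, ⟨le_rfl, lt_min hxb hxd⟩,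
      fun y ⟨hxy, hy⟩ => ⟨⟨hax.trans hxy, hy.trans_le (min_le_left _ _)⟩,
        hcx.trans hxy, hy.trans_le (min_le_right _ _)⟩⟩
  sUnion_eq := by
    refine eq_univ_of_forall fun x => ?_
    have hx : x < toReal.symm (toReal x + 1) := toReal.lt_symm_apply.2 (lt_add_one _)
    exact ⟨_, ⟨x, _, hx, rfl⟩, le_rfl, hx⟩
  eq_generateFrom := rfl

lemma isOpen_iff {s : Set Rl} : IsOpen s ↔ ∀ x ∈ s, ∃ b, x < b ∧ Ico x b ⊆ s := by
  rw [isTopologicalBasis_Ico.isOpen_iff]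
  refine forall₂_congr fun x _ => ⟨?_, fun ⟨b, hxb, hb⟩ => ⟨_, ⟨x, b, hxb, rfl⟩, ⟨le_rfl, hxb⟩, hb⟩⟩
  rintro ⟨_, ⟨a, b, -, rfl⟩, ⟨hax, hxb⟩, hs⟩
  exact ⟨b, hxb, (Ico_subset_Ico_left hax).trans hs⟩

lemma isOpen_Ici (a : Rl) : IsOpen (Ici a) :=
  isOpen_iff.2 fun x hx => ⟨toReal.symm (toReal x + 1),
    toReal.lt_symm_apply.2 (lt_add_one _), fun _ hy => hx.trans hy.1⟩

lemma continuous_toReal : Continuous toReal := by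
  rw [OrderTopology.topology_eq_generate_intervals (α := ℝ), continuous_generateFrom_iff]
  rintro _ ⟨a, rfl | rfl⟩
  · exact isOpen_iff.2 fun x hx => ⟨toReal.symm (toReal x + 1),
      toReal.lt_symm_apply.2 (lt_add_one _), fun y hy => lt_of_lt_of_le hx (toReal.monotone hy.1)⟩
  · exact isOpen_iff.2 fun x hx => ⟨toReal.symm a, toReal.lt_symm_apply.2 hx,
      fun y hy => toReal.lt_symm_apply.1 hy.2⟩

instance : T2Space Rl := T2Space.of_injective_continuous toReal.injective continuous_toReal

lemma isOpen_Ico (a b : Rl) : IsOpen (Ico a b) :=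
  isOpen_iff.2 fun _ hx => ⟨b, hx.2, Ico_subset_Ico_left hx.1⟩

/-- `⋃ x ∈ K, [x, x + ε)`, written through `toReal` since `Rl` carries no arithmetic. -/
def rightNbhd (K : Set Rl) (ε : ℝ) : Set Rl := {z | ∃ x ∈ K, x ≤ z ∧ toReal z < toReal x + ε}

lemma isOpen_rightNbhd (K : Set Rl) (ε : ℝ) : IsOpen (rightNbhd K ε) := by
  refine isOpen_iff.2 fun z ⟨x, hx, hxz, hzx⟩ => ⟨toReal.symm (toReal x + ε),
    toReal.lt_symm_apply.2 hzx, fun y ⟨hzy, hy⟩ => ⟨x, hx, hxz.trans hzy, ?_⟩⟩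
  exact toReal.lt_symm_apply.1 hy

lemma subset_rightNbhd (K : Set Rl) {ε : ℝ} (hε : 0 < ε) : K ⊆ rightNbhd K ε :=
  fun x hx => ⟨x, hx, le_rfl, lt_add_of_pos_right _ hε⟩

lemma _root_.IsCompact.eventually_rightNbhd_subset {K U : Set Rl} (hK : IsCompact K)
    (hU : IsOpen U) (hKU : K ⊆ U) : ∀ᶠ ε in 𝓝 (0 : ℝ), rightNbhd K ε ⊆ U := by
  suffices h : ∀ᶠ ε in 𝓝 (0 : ℝ), ∀ x ∈ K, ∀ z, x ≤ z → toReal z < toReal x + ε → z ∈ U by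
    filter_upwards [h] with ε hε z ⟨x, hx, hxz, hzx⟩ using hε x hx z hxz hzx
  refine hK.eventually_forall_of_forall_eventually fun y hy => ?_
  obtain ⟨b, hyb, hb⟩ := isOpen_iff.1 hU y (hKU hy)
  obtain ⟨δ, hδ, hbδ⟩ : ∃ δ > 0, toReal b = toReal y + 2 * δ :=
    ⟨(toReal b - toReal y) / 2, half_pos (sub_pos.2 (toReal.lt_iff_lt.2 hyb)), by ring⟩
  have hy' : y < toReal.symm (toReal y + δ) := toReal.lt_symm_apply.2 (lt_add_of_pos_right _ hδ)
  filter_upwards [prod_mem_nhds (Iio_mem_nhds hδ) ((isOpen_Ico _ _).mem_nhds ⟨le_rfl, hy'⟩)]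
    with ⟨ε, x⟩ ⟨hε, hyx, hx⟩ z hxz hzx
  dsimp only at hyx hx hxz hzx
  have hx' : toReal x < toReal y + δ := toReal.lt_symm_apply.1 hx
  refine hb ⟨hyx.trans hxz, toReal.lt_iff_lt.1 ?_⟩
  linarith [mem_Iio.1 hε]

lemma tendsto_of_subset_rightNbhd {K : Set Rl} (hK : IsCompact K) {a : ℕ → Set Rl}
    {ε : ℕ → ℝ} (hε : Tendsto ε atTop (𝓝 0)) (ha : ∀ n, a n ⊆ rightNbhd K (ε n)) :
    ∀ U, IsOpen U → K ⊆ U → ∀ᶠ n in atTop, a n ⊆ U := fun _ hU hKU =>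
  (hε.eventually (hK.eventually_rightNbhd_subset hU hKU)).mono fun n hn => (ha n).trans hn

lemma Ioo_not_subset_of_isCompact {K : Set Rl} (hK : IsCompact K) {a b : Rl} (hab : a < b) :
    ¬ Ioo a b ⊆ K := by
  intro hsub
  have hIio : IsClosed (Iio b) := compl_Ici (a := b) ▸ (isOpen_Ici b).isClosed_compl
  have hclosed : IsClosed (toReal '' (K ∩ Iio b)) :=
    ((hK.inter_right hIio).image continuous_toReal).isClosed
  have hIoo : Ioo (toReal a) (toReal b) ⊆ toReal '' (K ∩ Iio b) := fun x hx =>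
    ⟨toReal.symm x, ⟨hsub ⟨toReal.symm_apply_lt.2 hx.1, toReal.lt_symm_apply.2 hx.2⟩,
      toReal.symm_apply_lt.2 hx.2⟩, toReal.apply_symm_apply x⟩
  have hb : toReal b ∈ closure (Ioo (toReal a) (toReal b)) := by
    rw [closure_Ioo (toReal.lt_iff_lt.2 hab).ne]
    exact right_mem_Icc.2 (toReal.le_iff_le.2 hab.le)
  obtain ⟨c, ⟨-, hcb⟩, hc⟩ := closure_minimal hIoo hclosed hb
  exact hcb.ne (toReal.injective hc)

lemma vietorisClosure_subset_oneStep (A : Set (QX Rl)) : QX.vietorisClosure A ⊆ oneStep A := by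
  intro K hK
  have hnhds (n : ℕ) : ∃ a ∈ A, a.1 ⊆ rightNbhd K.1 (1 / (n + 1)) :=
    hK _ (isOpen_rightNbhd _ _) (subset_rightNbhd _ Nat.one_div_pos_of_nat)
  choose a haA haK using hnhds
  obtain ⟨d, had, hdir, hd⟩ := QX.exists_directed_isLUB_of_tendsto K (fun n => (a n).2.1)
    (tendsto_of_subset_rightNbhd K.2.1 tendsto_one_div_add_atTop_nhds_zero_nat haK)
  exact ⟨range d, forall_mem_range.2 fun n => ⟨a n, haA n, had n⟩, range_nonempty d, hdir, hd⟩

lemma not_wayBelow (y K : QX Rl) (hK : K.1.Nonempty) : ¬ wayBelow y K := by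
  intro hyK
  obtain ⟨x, hx⟩ := hK
  have hgap (n : ℕ) : ∃ p, p ∈ Ioo x (toReal.symm (toReal x + 1 / (n + 1))) ∧ p ∉ y.1 :=
    not_subset.1 (Ioo_not_subset_of_isCompact y.2.1
      (toReal.lt_symm_apply.2 (lt_add_of_pos_right _ Nat.one_div_pos_of_nat)))
  choose p hp hpy using hgap
  have hpK (n : ℕ) : {p n} ⊆ rightNbhd K.1 (1 / (n + 1)) :=
    singleton_subset_iff.2 ⟨x, hx, (hp n).1.le, toReal.lt_symm_apply.1 (hp n).2⟩
  obtain ⟨d, hpd, hdir, hd⟩ := QX.exists_directed_isLUB_of_tendsto K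
    (fun n => isCompact_singleton)
    (tendsto_of_subset_rightNbhd K.2.1 tendsto_one_div_add_atTop_nhds_zero_nat hpK)
  obtain ⟨_, ⟨n, rfl⟩, z, rfl, hyd⟩ := hyK _ (range_nonempty d) hdir K hd le_rfl
  exact hpy n (hyd (hpd n rfl))

end Rl

/-- `Q(ℝₗ)` has one-step closure but is not a continuous poset. -/
theorem QX_sorgenfrey_oneStep_not_continuous :
    HasOneStepClosure (QX Rl) ∧ ¬ ContinuousPoset (QX Rl) := by
  refine ⟨fun A => ?_, fun hcont => ?_⟩
  · exact ((QX.scottCl_subset_vietorisClosure A).trans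
      (Rl.vietorisClosure_subset_oneStep A)).antisymm (oneStep_subset_scottCl A)
  · let K : QX Rl := QX.ofCompact (isCompact_singleton (x := Rl.toReal.symm 0))
    obtain ⟨y, hy⟩ := (hcont K).1
    exact Rl.not_wayBelow y K (singleton_nonempty _) hy
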